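/- arXiv:1506.01213 — 2 statements merged into one kernel-verified Lean document; each statement's English description precedes it below -/
import Mathlib

section
/- Decoherence of off-diagonal blocks: in the non-demolition measurement model with C_ξ = Σ_ν c_ξ(ν)Π_ν and distinct distributions p(·|ν), for every ν ≠ ν' the off-diagonal block Π_ν ρ^{(k)}(ξ_1,…,ξ_k) Π_{ν'} converges to 0 in norm μ_ω-almost surely as k → ∞, where μ_ω is the probability measure on infinite protocols generated by μ_ω(ξ_1,…,ξ_k) = Tr(C_{ξ_k}⋯C_{ξ_1}ρ⁰C_{ξ_1}*⋯C_{ξ_k}*). -/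
open Matrix MeasureTheory Filter
open scoped BigOperators ComplexOrder Topology

/-- The trace norm `‖A‖₁ = Tr √(AᴴA)` of a complex matrix. -/
noncomputable def traceNorm {m : Type*} [Fintype m] [DecidableEq m] (A : Matrix m m ℂ) : ℝ :=
  (((Matrix.posSemidef_conjTranspose_mul_self A).1.cfc Real.sqrt).trace).re

/-- The Kraus operator `C_ξ = ∑_ν c_ξ(ν) P_ν`. -/
noncomputable def krausOp {σ N m : Type*} [Fintype N] [Fintype m] [DecidableEq m]
    (c : σ → N → ℂ) (P : N → Matrix m m ℂ) (ξ : σ) : Matrix m m ℂ :=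
  ∑ ν, c ξ ν • P ν

/-- The ordered product `C_{ξ_k} ⋯ C_{ξ_1}` along a protocol `(ξ_1, …, ξ_k)`. -/
noncomputable def ordProd {σ m : Type*} [Fintype m] [DecidableEq m]
    (C : σ → Matrix m m ℂ) {k : ℕ} (ξs : Fin k → σ) : Matrix m m ℂ :=
  ((List.ofFn fun i => C (ξs i)).reverse).prod

/-- The (normalized) posterior state after the protocol `ξs` (by convention `0` when the
protocol has probability `0`). -/
noncomputable def posterior {σ N m : Type*} [Fintype N] [Fintype m] [DecidableEq m]
    (c : σ → N → ℂ) (P : N → Matrix m m ℂ) (ρ : Matrix m m ℂ)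
    {k : ℕ} (ξs : Fin k → σ) : Matrix m m ℂ :=
  (((ordProd (krausOp c P) ξs * ρ * (ordProd (krausOp c P) ξs)ᴴ).trace).re)⁻¹ •
    (ordProd (krausOp c P) ξs * ρ * (ordProd (krausOp c P) ξs)ᴴ)

/-!
The Kraus operators are functions of the projections `P ν`, so the whole evolution is diagonal
in the decomposition `1 = ∑ P ν`: the unnormalized block `P ν (C ρ Cᴴ) P ν'` after the protocol
`ξ₁ … ξ_k` is `ρ`'s block multiplied by `∏ c_{ξᵢ}(ν) conj c_{ξᵢ}(ν')`. Normalizing divides by the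
probability of the protocol, which cancels against the cylinder weight in `μ`, so the expected
trace norm of the `k`-th block is at most `δ ^ k ‖P ν ρ P ν'‖₁` with
`δ = ∑ ξ, |c ξ ν| |c ξ ν'|`. The columns `|c · ν|` and `|c · ν'|` are distinct unit vectors,
so `δ < 1`; the expectations are summable, and a summable series of nonnegative random variables
has almost surely summable, hence vanishing, terms.
-/

open scoped ENNReal

lemma sum_mul_lt_one_of_sum_sq_eq_one {ι : Type*} [Fintype ι] {a b : ι → ℝ}
    (ha : ∑ i, a i ^ 2 = 1) (hb : ∑ i, b i ^ 2 = 1) (hab : a ≠ b) : ∑ i, a i * b i < 1 := by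
  obtain ⟨i, hi⟩ := Function.ne_iff.mp hab
  have hpos : 0 < ∑ i, (a i - b i) ^ 2 :=
    Finset.sum_pos' (fun i _ => sq_nonneg _)
      ⟨i, Finset.mem_univ _, by positivity [sub_ne_zero.mpr hi]⟩
  have hexpand : ∑ i, (a i - b i) ^ 2 = 2 - 2 * ∑ i, a i * b i := by
    simp only [sub_sq, Finset.sum_add_distrib, Finset.sum_sub_distrib, ha, hb, mul_assoc,
      ← Finset.mul_sum]
    ring
  linarith

/-- At a protocol of weight `ofReal t = 0` the junk value of the posterior's `t⁻¹` is harmless. -/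
lemma ofReal_abs_inv_mul_mul_ofReal_le (t : ℝ) {y : ℝ} (hy : 0 ≤ y) :
    ENNReal.ofReal (|t|⁻¹ * y) * ENNReal.ofReal t ≤ ENNReal.ofReal y := by
  rcases le_or_gt t 0 with ht | ht
  · simp [ENNReal.ofReal_of_nonpos ht]
  · rw [← ENNReal.ofReal_mul (by positivity), abs_of_pos ht, mul_right_comm,
      inv_mul_cancel₀ ht.ne', one_mul]

lemma measurable_prefix {σ : Type*} [MeasurableSpace σ] (k : ℕ) :
    Measurable fun (x : ℕ → σ) (i : Fin k) => x i :=
  measurable_pi_lambda _ fun _ => measurable_pi_apply _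

lemma lintegral_comp_prefix {σ : Type*} [Fintype σ] [MeasurableSpace σ]
    [DiscreteMeasurableSpace σ] (μ : Measure (ℕ → σ)) (k : ℕ) (g : (Fin k → σ) → ℝ≥0∞) :
    ∫⁻ x, g (fun i => x i) ∂μ = ∑ ξs, g ξs * μ {x | ∀ i : Fin k, x i = ξs i} := by
  rw [← lintegral_map (measurable_of_finite g) (measurable_prefix k), lintegral_fintype]
  refine Finset.sum_congr rfl fun ξs _ => ?_
  rw [Measure.map_apply (measurable_prefix k) (measurableSet_singleton ξs)]
  congr 2
  ext x
  simp [funext_iff]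

lemma ae_tendsto_zero_of_tsum_lintegral_ne_top {α : Type*} [MeasurableSpace α] {μ : Measure α}
    {f : ℕ → α → ℝ≥0∞} (hf : ∀ k, Measurable (f k)) (h : ∑' k, ∫⁻ x, f k x ∂μ ≠ ∞) :
    ∀ᵐ x ∂μ, Tendsto (fun k => f k x) atTop (𝓝 0) := by
  rw [← lintegral_tsum fun k => (hf k).aemeasurable] at h
  filter_upwards [ae_lt_top (Measurable.tsum hf) h] with x hx
  exact ENNReal.tendsto_atTop_zero_of_tsum_ne_top hx.ne

section TraceNorm

open scoped MatrixOrder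

variable {m : Type*} [Fintype m] [DecidableEq m]

lemma traceNorm_eq (A : Matrix m m ℂ) : traceNorm A = (cfc Real.sqrt (Aᴴ * A)).trace.re := by
  rw [traceNorm, IsHermitian.cfc_eq]

lemma traceNorm_nonneg (A : Matrix m m ℂ) : 0 ≤ traceNorm A := by
  rw [traceNorm_eq]
  have : (cfc Real.sqrt (Aᴴ * A)).PosSemidef :=
    nonneg_iff_posSemidef.mp (cfc_nonneg fun x _ => Real.sqrt_nonneg x)
  exact (Complex.nonneg_iff.mp this.trace_nonneg).1

lemma traceNorm_smul (z : ℂ) (A : Matrix m m ℂ) : traceNorm (z • A) = ‖z‖ * traceNorm A := by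
  have hsq : (z • A)ᴴ * (z • A) = (‖z‖ ^ 2) • (Aᴴ * A) := by
    rw [conjTranspose_smul, smul_mul_smul_comm, Complex.star_def, Complex.conj_mul',
      ← Complex.ofReal_pow, Complex.coe_smul]
  have hsqrt : cfc Real.sqrt ((‖z‖ ^ 2) • (Aᴴ * A)) = ‖z‖ • cfc Real.sqrt (Aᴴ * A) := by
    have hA : IsSelfAdjoint (Aᴴ * A) := (posSemidef_conjTranspose_mul_self A).1
    rw [← cfc_comp_smul (‖z‖ ^ 2) Real.sqrt (Aᴴ * A), ← cfc_const_mul ‖z‖ Real.sqrt (Aᴴ * A)]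
    congr 1
    funext x
    rw [smul_eq_mul, Real.sqrt_mul (by positivity), Real.sqrt_sq (norm_nonneg z)]
  rw [traceNorm_eq, traceNorm_eq, hsq, hsqrt, trace_smul, Complex.real_smul, Complex.re_ofReal_mul]

lemma traceNorm_real_smul (r : ℝ) (A : Matrix m m ℂ) : traceNorm (r • A) = |r| * traceNorm A := by
  rw [← Complex.coe_smul, traceNorm_smul, Complex.norm_real, Real.norm_eq_abs]

end TraceNorm

section OrthogonalProjections

variable {R A N : Type*} [CommSemiring R] [Semiring A] [Algebra R A] [Fintype N] [DecidableEq N]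
  {P : N → A}

lemma proj_mul_sum_smul (horth : ∀ ν ν', P ν * P ν' = if ν = ν' then P ν else 0)
    (a : N → R) (ν : N) : P ν * ∑ ν', a ν' • P ν' = a ν • P ν := by
  simp [Finset.mul_sum, horth]

lemma sum_smul_mul_proj (horth : ∀ ν ν', P ν * P ν' = if ν = ν' then P ν else 0)
    (a : N → R) (ν : N) : (∑ ν', a ν' • P ν') * P ν = a ν • P ν := by
  simp [Finset.sum_mul, horth]

lemma sum_smul_mul_sum_smul (horth : ∀ ν ν', P ν * P ν' = if ν = ν' then P ν else 0)
    (a b : N → R) : (∑ ν, a ν • P ν) * ∑ ν, b ν • P ν = ∑ ν, (a ν * b ν) • P ν := by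
  simp [Finset.sum_mul, proj_mul_sum_smul horth, smul_smul]

lemma list_prod_sum_smul (horth : ∀ ν ν', P ν * P ν' = if ν = ν' then P ν else 0)
    (hsum : ∑ ν, P ν = 1) (L : List (N → R)) :
    (L.map fun a => ∑ ν, a ν • P ν).prod = ∑ ν, (L.map fun a => a ν).prod • P ν := by
  induction L with
  | nil => simp [hsum]
  | cons a L ih => simp only [List.map_cons, List.prod_cons, ih, sum_smul_mul_sum_smul horth]

end OrthogonalProjections

lemma sum_smul_conjTranspose {N m : Type*} [Fintype N] {P : N → Matrix m m ℂ}
    (hherm : ∀ ν, (P ν)ᴴ = P ν) (a : N → ℂ) :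
    (∑ ν, a ν • P ν)ᴴ = ∑ ν, star (a ν) • P ν := by
  simp [conjTranspose_sum, hherm]

section Kraus

variable {σ N m : Type*} [Fintype N] [DecidableEq N] [Fintype m] [DecidableEq m]
  {c : σ → N → ℂ} {P : N → Matrix m m ℂ}

lemma ordProd_krausOp (horth : ∀ ν ν', P ν * P ν' = if ν = ν' then P ν else 0)
    (hsum : ∑ ν, P ν = 1) {k : ℕ} (ξs : Fin k → σ) :
    ordProd (krausOp c P) ξs = ∑ ν, (∏ i, c (ξs i) ν) • P ν := by
  have := list_prod_sum_smul horth hsum (List.ofFn fun i => c (ξs i)).reverse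
  simp only [List.map_reverse, List.map_ofFn, List.prod_reverse, List.prod_ofFn] at this
  exact this

lemma proj_mul_mul_conjTranspose_mul_proj (hherm : ∀ ν, (P ν)ᴴ = P ν)
    (horth : ∀ ν ν', P ν * P ν' = if ν = ν' then P ν else 0) (a : N → ℂ) (ρ : Matrix m m ℂ)
    (ν ν' : N) :
    P ν * ((∑ ν, a ν • P ν) * ρ * (∑ ν, a ν • P ν)ᴴ) * P ν' =
      (a ν * star (a ν')) • (P ν * ρ * P ν') := by
  rw [sum_smul_conjTranspose hherm]
  calc _ = P ν * (∑ ν, a ν • P ν) * ρ * ((∑ ν, star (a ν) • P ν) * P ν') := by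
          simp only [Matrix.mul_assoc]
    _ = _ := by
      rw [proj_mul_sum_smul horth, sum_smul_mul_proj horth, smul_mul_assoc, smul_mul_assoc,
        mul_smul_comm, smul_smul]

lemma sum_norm_sq_eq_one_of_sum_krausOp [Fintype σ] (hherm : ∀ ν, (P ν)ᴴ = P ν)
    (horth : ∀ ν ν', P ν * P ν' = if ν = ν' then P ν else 0) (hne : ∀ ν, P ν ≠ 0)
    (hkraus : ∑ ξ, (krausOp c P ξ)ᴴ * krausOp c P ξ = 1) (ν : N) :
    ∑ ξ, ‖c ξ ν‖ ^ 2 = 1 := by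
  have hCC : ∑ ξ, (krausOp c P ξ)ᴴ * krausOp c P ξ = ∑ ν, (∑ ξ, (‖c ξ ν‖ ^ 2 : ℂ)) • P ν := by
    simp only [krausOp, sum_smul_conjTranspose hherm, sum_smul_mul_sum_smul horth,
      Complex.star_def, Complex.conj_mul', Finset.sum_smul]
    exact Finset.sum_comm
  have h := congrArg (P ν * ·) (hCC.symm.trans hkraus)
  simp only [proj_mul_sum_smul horth, Matrix.mul_one] at h
  exact_mod_cast smul_left_injective ℂ (hne ν) (h.trans (one_smul ℂ (P ν)).symm)

lemma traceNorm_proj_mul_posterior_mul_proj (hherm : ∀ ν, (P ν)ᴴ = P ν)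
    (horth : ∀ ν ν', P ν * P ν' = if ν = ν' then P ν else 0) (hsum : ∑ ν, P ν = 1)
    (ρ : Matrix m m ℂ) {k : ℕ} (ξs : Fin k → σ) (ν ν' : N) :
    traceNorm (P ν * posterior c P ρ ξs * P ν') =
      |((ordProd (krausOp c P) ξs * ρ * (ordProd (krausOp c P) ξs)ᴴ).trace).re|⁻¹ *
        ((∏ i, ‖c (ξs i) ν‖ * ‖c (ξs i) ν'‖) * traceNorm (P ν * ρ * P ν')) := by
  rw [posterior, mul_smul_comm, smul_mul_assoc, traceNorm_real_smul, abs_inv,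
    ordProd_krausOp horth hsum, proj_mul_mul_conjTranspose_mul_proj hherm horth, traceNorm_smul,
    norm_mul, norm_star, norm_prod, norm_prod, Finset.prod_mul_distrib]

end Kraus

lemma lintegral_traceNorm_posterior_block_le {σ N m : Type*} [Fintype σ] [MeasurableSpace σ]
    [DiscreteMeasurableSpace σ] [Fintype N] [DecidableEq N] [Fintype m] [DecidableEq m]
    {c : σ → N → ℂ} {P : N → Matrix m m ℂ} (hherm : ∀ ν, (P ν)ᴴ = P ν)
    (horth : ∀ ν ν', P ν * P ν' = if ν = ν' then P ν else 0) (hsum : ∑ ν, P ν = 1)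
    (ρ : Matrix m m ℂ) {μ : Measure (ℕ → σ)}
    (hμ : ∀ (k : ℕ) (ξs : Fin k → σ),
      μ {x | ∀ i : Fin k, x (i : ℕ) = ξs i} =
        ENNReal.ofReal
          (((ordProd (krausOp c P) ξs * ρ * (ordProd (krausOp c P) ξs)ᴴ).trace).re))
    (ν ν' : N) (k : ℕ) :
    ∫⁻ x, ENNReal.ofReal (traceNorm (P ν * posterior c P ρ (fun i : Fin k => x i) * P ν')) ∂μ ≤
      ENNReal.ofReal ((∑ ξ, ‖c ξ ν‖ * ‖c ξ ν'‖) ^ k * traceNorm (P ν * ρ * P ν')) := by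
  have hweight_nonneg (ξs : Fin k → σ) :
      0 ≤ (∏ i, ‖c (ξs i) ν‖ * ‖c (ξs i) ν'‖) * traceNorm (P ν * ρ * P ν') :=
    mul_nonneg (by positivity) (traceNorm_nonneg _)
  calc _ = ∑ ξs, ENNReal.ofReal (traceNorm (P ν * posterior c P ρ ξs * P ν')) *
        μ {x | ∀ i : Fin k, x i = ξs i} := lintegral_comp_prefix μ k _
    _ ≤ ∑ ξs : Fin k → σ, ENNReal.ofReal
          ((∏ i, ‖c (ξs i) ν‖ * ‖c (ξs i) ν'‖) * traceNorm (P ν * ρ * P ν')) := by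
      gcongr with ξs
      rw [hμ, traceNorm_proj_mul_posterior_mul_proj hherm horth hsum]
      exact ofReal_abs_inv_mul_mul_ofReal_le _ (hweight_nonneg ξs)
    _ = _ := by
      rw [← ENNReal.ofReal_sum_of_nonneg fun ξs _ => hweight_nonneg ξs, ← Finset.sum_mul,
        Fintype.sum_pow]

theorem off_diagonal_decoherence_ae_general {σ N m : Type*} [Fintype σ]
    [Fintype N] [DecidableEq N] [Fintype m] [DecidableEq m]
    [MeasurableSpace σ] [DiscreteMeasurableSpace σ]
    (c : σ → N → ℂ) (P : N → Matrix m m ℂ)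
    (hherm : ∀ ν, (P ν)ᴴ = P ν)
    (horth : ∀ ν ν', P ν * P ν' = if ν = ν' then P ν else 0)
    (hsum : ∑ ν, P ν = 1) (hne : ∀ ν, P ν ≠ 0)
    (hkraus : ∑ ξ, (krausOp c P ξ)ᴴ * krausOp c P ξ = 1)
    (hdist : ∀ ν ν', ν ≠ ν' →
      (fun ξ => ‖c ξ ν‖ ^ 2) ≠ (fun ξ => ‖c ξ ν'‖ ^ 2))
    (ρ : Matrix m m ℂ)
    (μ : Measure (ℕ → σ))
    (hμ : ∀ (k : ℕ) (ξs : Fin k → σ),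
      μ {x | ∀ i : Fin k, x (i : ℕ) = ξs i} =
        ENNReal.ofReal
          (((ordProd (krausOp c P) ξs * ρ * (ordProd (krausOp c P) ξs)ᴴ).trace).re)) :
    ∀ ν ν', ν ≠ ν' →
      ∀ᵐ x ∂μ, Tendsto
        (fun k => traceNorm (P ν * posterior c P ρ (fun i : Fin k => x (i : ℕ)) * P ν'))
        atTop (𝓝 0) := by
  intro ν ν' hνν'
  set δ := ∑ ξ, ‖c ξ ν‖ * ‖c ξ ν'‖
  have hδ_lt_one : δ < 1 :=
    sum_mul_lt_one_of_sum_sq_eq_one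
      (sum_norm_sq_eq_one_of_sum_krausOp hherm horth hne hkraus ν)
      (sum_norm_sq_eq_one_of_sum_krausOp hherm horth hne hkraus ν')
      fun h => hdist ν ν' hνν' (congrArg (fun f ξ => f ξ ^ 2) h)
  have hgeometric : Summable fun k => δ ^ k * traceNorm (P ν * ρ * P ν') :=
    (summable_geometric_of_lt_one (by positivity) hδ_lt_one).mul_right _
  have hexpectations : ∑' k, ∫⁻ x, ENNReal.ofReal
      (traceNorm (P ν * posterior c P ρ (fun i : Fin k => x i) * P ν')) ∂μ ≠ ∞ := by
    refine ne_top_of_le_ne_top ?_ (ENNReal.tsum_le_tsum fun k =>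
      lintegral_traceNorm_posterior_block_le hherm horth hsum ρ hμ ν ν' k)
    rw [← ENNReal.ofReal_tsum_of_nonneg
      (fun k => by positivity [traceNorm_nonneg (P ν * ρ * P ν')]) hgeometric]
    exact ENNReal.ofReal_ne_top
  filter_upwards [ae_tendsto_zero_of_tsum_lintegral_ne_top
    (fun k => (measurable_of_finite (fun ξs : Fin k → σ =>
      ENNReal.ofReal (traceNorm (P ν * posterior c P ρ ξs * P ν')))).comp (measurable_prefix k))
    hexpectations] with x hx
  simpa only [Function.comp_def, ENNReal.toReal_ofReal (traceNorm_nonneg _),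
    ENNReal.toReal_zero] using (ENNReal.tendsto_toReal ENNReal.zero_ne_top).comp hx

/-- decoherence of off-diagonal blocks: in the non-demolition measurement
model, for `ν ≠ ν'` the off-diagonal block `P_ν ρ⁽ᵏ⁾(ξ_1,…,ξ_k) P_{ν'}` of the posterior
state converges to `0` in norm, `μ_ω`-almost surely as `k → ∞`, where `μ_ω` is the
probability measure on infinite protocols whose cylinder probabilities are
`Tr(C_{ξ_k}⋯C_{ξ_1} ρ⁰ C_{ξ_1}ᴴ⋯C_{ξ_k}ᴴ)`. -/
theorem off_diagonal_decoherence_ae {σ N m : Type*} [Fintype σ] [DecidableEq σ]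
    [Fintype N] [DecidableEq N] [Fintype m] [DecidableEq m]
    [MeasurableSpace σ] [DiscreteMeasurableSpace σ]
    (c : σ → N → ℂ) (P : N → Matrix m m ℂ)
    (hherm : ∀ ν, (P ν)ᴴ = P ν)
    (horth : ∀ ν ν', P ν * P ν' = if ν = ν' then P ν else 0)
    (hsum : ∑ ν, P ν = 1) (hne : ∀ ν, P ν ≠ 0)
    (hkraus : ∑ ξ, (krausOp c P ξ)ᴴ * krausOp c P ξ = 1)
    (hdist : ∀ ν ν', ν ≠ ν' →
      (fun ξ => ‖c ξ ν‖ ^ 2) ≠ (fun ξ => ‖c ξ ν'‖ ^ 2))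
    (ρ : Matrix m m ℂ) (hρ : ρ.PosSemidef) (hρ1 : ρ.trace = 1)
    (μ : Measure (ℕ → σ)) [IsProbabilityMeasure μ]
    (hμ : ∀ (k : ℕ) (ξs : Fin k → σ),
      μ {x | ∀ i : Fin k, x (i : ℕ) = ξs i} =
        ENNReal.ofReal
          (((ordProd (krausOp c P) ξs * ρ * (ordProd (krausOp c P) ξs)ᴴ).trace).re)) :
    ∀ ν ν', ν ≠ ν' →
      ∀ᵐ x ∂μ, Tendsto
        (fun k => traceNorm (P ν * posterior c P ρ (fun i : Fin k => x (i : ℕ)) * P ν'))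
        atTop (𝓝 0) :=
  off_diagonal_decoherence_ae_general c P hherm horth hsum hne hkraus hdist ρ μ hμ
end

section
/- Posterior concentration estimate: in the non-demolition model with μ̃(ξ_1,…,ξ_n|ν) = Π_i p(ξ_i|ν), p(ξ|ν)>0 for all ξ,ν, and posterior weights Tr(Π_{ν'} ρ̃^{(n)}) = Tr(Π_{ν'}ρ⁰)·μ̃(ξ^{(n)}|ν')/μ̃(ξ^{(n)}), the following identity and bound hold: μ̃(ξ^{(n)}|ν') / μ̃(ξ^{(n)}|ν) = exp(n·I_{p_ν}(f^{(n)}) − n·I_{p_{ν'}}(f^{(n)})), where f^{(n)} is the empirical distribution of (ξ_1,…,ξ_n); consequently, if Tr(Π_ν ρ⁰) > 0 and I_{p_ν}(f^{(n)}) ≤ δ/2 while I_{p_{ν'}}(f^{(n)}) ≥ min_{ν≠ν''} I_{p_ν}(p_{ν''}) − δ/2, then Tr(Π_{ν'} ρ̃^{(n)}) ≤ (Tr(Π_{ν'}ρ⁰)/Tr(Π_ν ρ⁰))·exp(−n(min_{ν≠ν''}I_{p_ν}(p_{ν''}) − δ)). -/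
open scoped BigOperators

/-- Real-valued relative entropy `I_pref(q) = ∑ q ξ * log (q ξ / pref ξ)`. -/
noncomputable def relEntR {σ : Type*} [Fintype σ] (q pref : σ → ℝ) : ℝ :=
  ∑ ξ, q ξ * Real.log (q ξ / pref ξ)

/-- Empirical distribution of the finite protocol `ξs : Fin n → σ`. -/
noncomputable def empFreq {σ : Type*} [DecidableEq σ] {n : ℕ} (ξs : Fin n → σ) (ξ : σ) : ℝ :=
  (Finset.univ.filter (fun j : Fin n => ξs j = ξ)).card / n

/-- The minimal pairwise relative entropy `min_{ν ≠ ν'} I_{p_ν}(p_{ν'})`. -/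
noncomputable def minRelEnt {σ N : Type*} [Fintype σ] (p : σ → N → ℝ) : ℝ :=
  sInf {r : ℝ | ∃ ν₁ ν₂ : N, ν₁ ≠ ν₂ ∧
    r = relEntR (fun ξ => p ξ ν₂) (fun ξ => p ξ ν₁)}

/-!
The log-likelihood `∑ᵢ log p(ξᵢ|ν)` of a sample equals `n ∑_ξ f(ξ) log p(ξ|ν)` for its
empirical distribution `f`, and `∑_ξ f log p = -I_p(f) - H(f)`. The entropy `H(f)` cancels in a
likelihood ratio, which is therefore `exp(n I_{p_ν}(f) - n I_{p_{ν'}}(f))`. The posterior weight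
of `ν'` is at most its prior weight times the likelihood ratio against `ν`, since the normalizer
`∑ w ν'' μ̃(ξ|ν'')` is at least its `ν` term; the hypotheses on `I(f)` bound the exponent.
-/

open Finset Real

section Empirical

variable {σ : Type*} [Fintype σ]

theorem relEntR_sub_relEntR (f : σ → ℝ) {p q : σ → ℝ} (hp : ∀ ξ, 0 < p ξ) (hq : ∀ ξ, 0 < q ξ) :
    relEntR f p - relEntR f q = ∑ ξ, f ξ * log (q ξ / p ξ) := by
  rw [relEntR, relEntR, ← sum_sub_distrib]
  refine sum_congr rfl fun ξ _ => ?_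
  rcases eq_or_ne (f ξ) 0 with hf | hf
  · simp [hf]
  rw [log_div hf (hp ξ).ne', log_div hf (hq ξ).ne', log_div (hq ξ).ne' (hp ξ).ne']
  ring

variable [DecidableEq σ] {n : ℕ}

theorem natCast_mul_sum_empFreq_mul (ξs : Fin n → σ) (g : σ → ℝ) :
    (n : ℝ) * ∑ ξ, empFreq ξs ξ * g ξ = ∑ i, g (ξs i) := by
  rcases Nat.eq_zero_or_pos n with rfl | hn
  · simp
  rw [← sum_fiberwise univ ξs (fun i => g (ξs i)), mul_sum]
  refine sum_congr rfl fun ξ _ => ?_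
  rw [sum_congr rfl fun i hi => by rw [(mem_filter.mp hi).2], sum_const, nsmul_eq_mul,
    empFreq, ← mul_assoc, mul_div_cancel₀ _ (by positivity)]

theorem prod_div_prod_eq_exp_relEntR (ξs : Fin n → σ) {p q : σ → ℝ} (hp : ∀ ξ, 0 < p ξ)
    (hq : ∀ ξ, 0 < q ξ) :
    (∏ i, q (ξs i)) / (∏ i, p (ξs i)) =
      exp ((n : ℝ) * relEntR (empFreq ξs) p - (n : ℝ) * relEntR (empFreq ξs) q) := by
  rw [← mul_sub, relEntR_sub_relEntR _ hp hq, natCast_mul_sum_empFreq_mul, exp_sum,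
    ← prod_div_distrib]
  exact prod_congr rfl fun i _ => (exp_log (div_pos (hq _) (hp _))).symm

end Empirical

theorem mul_div_sum_le_div_mul_div {ι : Type*} [Fintype ι] {w L : ι → ℝ}
    (hw : ∀ i, 0 ≤ w i) (hL : ∀ i, 0 ≤ L i) {ν : ι} (hwν : 0 < w ν) (hLν : 0 < L ν) (ν' : ι) :
    w ν' * L ν' / ∑ i, w i * L i ≤ w ν' / w ν * (L ν' / L ν) := by
  have hterm : w ν * L ν ≤ ∑ i, w i * L i :=
    single_le_sum (fun i _ => mul_nonneg (hw i) (hL i)) (mem_univ ν)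
  rw [div_mul_div_comm]
  exact div_le_div_of_nonneg_left (mul_nonneg (hw ν') (hL ν')) (mul_pos hwν hLν) hterm

theorem posterior_concentration_general {σ N : Type*} [Fintype σ] [DecidableEq σ]
    [Fintype N]
    (p : σ → N → ℝ) (hp : ∀ ξ ν, 0 < p ξ ν)
    (w : N → ℝ) (hw0 : ∀ ν, 0 ≤ w ν)
    (n : ℕ) (ξs : Fin n → σ) :
    (∀ ν ν' : N,
      (∏ i, p (ξs i) ν') / (∏ i, p (ξs i) ν) =
        Real.exp ((n : ℝ) * relEntR (empFreq ξs) (fun ξ => p ξ ν) -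
          (n : ℝ) * relEntR (empFreq ξs) (fun ξ => p ξ ν'))) ∧
    (∀ δ : ℝ, 0 < δ → δ < minRelEnt p →
      ∀ ν ν' : N, ν ≠ ν' → 0 < w ν →
        relEntR (empFreq ξs) (fun ξ => p ξ ν) ≤ δ / 2 →
        minRelEnt p - δ / 2 ≤ relEntR (empFreq ξs) (fun ξ => p ξ ν') →
        w ν' * (∏ i, p (ξs i) ν') / (∑ ν'', w ν'' * ∏ i, p (ξs i) ν'') ≤
          (w ν' / w ν) * Real.exp (-(n : ℝ) * (minRelEnt p - δ))) := by
  have hratio ν ν' := prod_div_prod_eq_exp_relEntR ξs (fun ξ => hp ξ ν) (fun ξ => hp ξ ν')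
  refine ⟨hratio, fun δ _ _ ν ν' _ hwν hfν hfν' => ?_⟩
  have hL ν : 0 < ∏ i, p (ξs i) ν := prod_pos fun i _ => hp _ _
  calc w ν' * (∏ i, p (ξs i) ν') / (∑ ν'', w ν'' * ∏ i, p (ξs i) ν'')
      ≤ w ν' / w ν * ((∏ i, p (ξs i) ν') / (∏ i, p (ξs i) ν)) :=
        mul_div_sum_le_div_mul_div hw0 (fun ν => (hL ν).le) hwν (hL ν) ν'
    _ ≤ w ν' / w ν * exp (-(n : ℝ) * (minRelEnt p - δ)) := by
        rw [hratio]
        gcongr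
        · exact div_nonneg (hw0 ν') hwν.le
        · have hn : (0 : ℝ) ≤ n := n.cast_nonneg
          linarith [mul_le_mul_of_nonneg_left hfν hn, mul_le_mul_of_nonneg_left hfν' hn]

/-- posterior concentration estimate: in the non-demolition model with
likelihoods `μ̃(ξ^{(n)}|ν) = ∏ᵢ p(ξᵢ|ν)` (all `p(ξ|ν) > 0`), one has the identity
`μ̃(ξ^{(n)}|ν')/μ̃(ξ^{(n)}|ν) = exp(n I_{p_ν}(f⁽ⁿ⁾) − n I_{p_{ν'}}(f⁽ⁿ⁾))`; consequently,
if `Tr(Π_ν ρ⁰) = w ν > 0`, `I_{p_ν}(f⁽ⁿ⁾) ≤ δ/2` and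
`I_{p_{ν'}}(f⁽ⁿ⁾) ≥ min_{ν≠ν''} I_{p_ν}(p_{ν''}) − δ/2`, then the posterior weight of `ν'`
satisfies `Tr(Π_{ν'} ρ̃⁽ⁿ⁾) ≤ (w ν'/w ν) exp(−n(min I − δ))`. -/
theorem posterior_concentration {σ N : Type*} [Fintype σ] [DecidableEq σ]
    [Fintype N] [Nontrivial N]
    (p : σ → N → ℝ) (hp : ∀ ξ ν, 0 < p ξ ν) (hp1 : ∀ ν, ∑ ξ, p ξ ν = 1)
    (hdist : ∀ ν ν', ν ≠ ν' → (fun ξ => p ξ ν) ≠ (fun ξ => p ξ ν'))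
    (w : N → ℝ) (hw0 : ∀ ν, 0 ≤ w ν) (hw1 : ∑ ν, w ν = 1)
    (n : ℕ) (ξs : Fin n → σ) :
    (∀ ν ν' : N,
      (∏ i, p (ξs i) ν') / (∏ i, p (ξs i) ν) =
        Real.exp ((n : ℝ) * relEntR (empFreq ξs) (fun ξ => p ξ ν) -
          (n : ℝ) * relEntR (empFreq ξs) (fun ξ => p ξ ν'))) ∧
    (∀ δ : ℝ, 0 < δ → δ < minRelEnt p →
      ∀ ν ν' : N, ν ≠ ν' → 0 < w ν →
        relEntR (empFreq ξs) (fun ξ => p ξ ν) ≤ δ / 2 →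
        minRelEnt p - δ / 2 ≤ relEntR (empFreq ξs) (fun ξ => p ξ ν') →
        w ν' * (∏ i, p (ξs i) ν') / (∑ ν'', w ν'' * ∏ i, p (ξs i) ν'') ≤
          (w ν' / w ν) * Real.exp (-(n : ℝ) * (minRelEnt p - δ))) :=
  posterior_concentration_general p hp w hw0 n ξs
end
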